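/- arXiv:2107.11518 — 5 statements merged into one kernel-verified Lean document; each statement's English description precedes it below -/
import Mathlib

section
/- Let n ≥ 2 be an integer. Let Q(t) = 1 + Σ_{k=2}^{n−2} b_k t^k + t^n be a real polynomial with all coefficients b_k ≥ 0 (where the middle sum is empty if n ≤ 3), and let P(t) = Σ_{k=2}^{ℓ} a_k t^k be a real polynomial with all coefficients a_k ≥ 0 and degree bound ℓ ≤ 2n − 1. Assume P(1) ≤ Q(1). Then for every integer m ≥ 3 and every real t ≥ 1, one has m·P(t) < Q(t)^m. -/
/-!
Put `u = tⁿ` and `c = ∑ bₖ`. Nonnegative coefficients and `t ≥ 1` give `P(t) ≤ P(1) t²ⁿ ≤ (2 + c) u²`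
and `Q(t) ≥ 1 + c + u`. The cubic inequality `3 (2 + c) u² < (1 + c + u)³` settles `m = 3`, and the
right-hand side `D ^ m` at least doubles with each further step, which outpaces the linear growth of `m · P(t)`.
-/

open Finset

lemma natCast_mul_lt_pow_of_three_mul_lt_pow_three {C D : ℝ} (hD : 2 ≤ D) (h3 : 3 * C < D ^ 3)
    {m : ℕ} (hm : 3 ≤ m) : (m : ℝ) * C < D ^ m := by
  induction m, hm using Nat.le_induction with
  | base => exact_mod_cast h3
  | succ m hm ih =>
    have hC : C < D ^ m := by
      rcases lt_or_ge C 0 with hC | hC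
      · exact hC.trans_le (by positivity)
      · calc C ≤ 3 * C := by linarith
          _ < D ^ 3 := h3
          _ ≤ D ^ m := pow_le_pow_right₀ (by linarith) hm
    have hdouble : 2 * D ^ m ≤ D ^ (m + 1) := by
      rw [pow_succ']
      exact mul_le_mul_of_nonneg_right hD (by positivity)
    push_cast
    linarith

lemma sum_mul_pow_le_sum_mul_pow {ι : Type*} {s : Finset ι} {a : ι → ℝ} {e : ι → ℕ} {t : ℝ}
    {N : ℕ} (ha : ∀ i ∈ s, 0 ≤ a i) (ht : 1 ≤ t) (he : ∀ i ∈ s, e i ≤ N) :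
    ∑ i ∈ s, a i * t ^ e i ≤ (∑ i ∈ s, a i) * t ^ N := by
  rw [sum_mul]
  exact sum_le_sum fun i hi => mul_le_mul_of_nonneg_left (pow_le_pow_right₀ ht (he i hi)) (ha i hi)

lemma sum_le_sum_mul_pow {ι : Type*} {s : Finset ι} {a : ι → ℝ} {e : ι → ℕ} {t : ℝ}
    (ha : ∀ i ∈ s, 0 ≤ a i) (ht : 1 ≤ t) :
    ∑ i ∈ s, a i ≤ ∑ i ∈ s, a i * t ^ e i :=
  sum_le_sum fun i hi => le_mul_of_one_le_right (ha i hi) (one_le_pow₀ ht)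

lemma three_mul_lt_pow_three {c u : ℝ} (hc : 0 ≤ c) (hu : 1 ≤ u) :
    3 * ((2 + c) * u ^ 2) < (1 + c + u) ^ 3 := by
  have hs : 1 ≤ 1 + c := by linarith
  have hlow : 1 + 3 * u ≤ (1 + c) ^ 3 + 3 * (1 + c) ^ 2 * u := by
    nlinarith [one_le_pow₀ (n := 2) hs, one_le_pow₀ (n := 3) hs]
  -- the difference of the two sides is at least `1 + 3u + u³ - 3u² = (u - 1)³ + 2`
  nlinarith [pow_nonneg (sub_nonneg.2 hu) 3]

theorem stmt_5_general (n : ℕ) (ℓ : ℕ) (hℓ : ℓ ≤ 2 * n - 1)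
    (a b : ℕ → ℝ) (ha : ∀ k, 0 ≤ a k) (hb : ∀ k, 0 ≤ b k)
    (P Q : ℝ → ℝ)
    (hPdef : ∀ t : ℝ, P t = ∑ k ∈ Finset.Icc 2 ℓ, a k * t ^ k)
    (hQdef : ∀ t : ℝ, Q t = 1 + (∑ k ∈ Finset.Icc 2 (n - 2), b k * t ^ k) + t ^ n)
    (hHilali : P 1 ≤ Q 1) :
    ∀ m : ℕ, 3 ≤ m → ∀ t : ℝ, 1 ≤ t → (m : ℝ) * P t < Q t ^ m := by
  intro m hm t ht
  set c := ∑ k ∈ Icc 2 (n - 2), b k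
  have hc : 0 ≤ c := sum_nonneg fun k _ => hb k
  have hu : 1 ≤ t ^ n := one_le_pow₀ ht
  have hP1 : ∑ k ∈ Icc 2 ℓ, a k ≤ 2 + c := by
    simpa [hPdef, hQdef, c, add_comm, add_left_comm, one_add_one_eq_two] using hHilali
  have hPt : P t ≤ (2 + c) * (t ^ n) ^ 2 := by
    rw [hPdef, ← pow_mul, mul_comm n]
    refine (sum_mul_pow_le_sum_mul_pow (fun k _ => ha k) ht fun k hk => ?_).trans
      (mul_le_mul_of_nonneg_right hP1 (by positivity))
    have := (mem_Icc.1 hk).2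
    omega
  have hQt : 1 + c + t ^ n ≤ Q t := by
    rw [hQdef]
    have : c ≤ ∑ k ∈ Icc 2 (n - 2), b k * t ^ k := sum_le_sum_mul_pow (fun k _ => hb k) ht
    linarith
  calc (m : ℝ) * P t ≤ m * ((2 + c) * (t ^ n) ^ 2) := by gcongr
    _ < (1 + c + t ^ n) ^ m :=
      natCast_mul_lt_pow_of_three_mul_lt_pow_three (by linarith) (three_mul_lt_pow_three hc hu) hm
    _ ≤ Q t ^ m := pow_le_pow_left₀ (by linarith) hQt m

theorem stmt_5 (n : ℕ) (hn : 2 ≤ n) (ℓ : ℕ) (hℓ : ℓ ≤ 2 * n - 1)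
    (a b : ℕ → ℝ) (ha : ∀ k, 0 ≤ a k) (hb : ∀ k, 0 ≤ b k)
    (P Q : ℝ → ℝ)
    (hPdef : ∀ t : ℝ, P t = ∑ k ∈ Finset.Icc 2 ℓ, a k * t ^ k)
    (hQdef : ∀ t : ℝ, Q t = 1 + (∑ k ∈ Finset.Icc 2 (n - 2), b k * t ^ k) + t ^ n)
    (hHilali : P 1 ≤ Q 1) :
    ∀ m : ℕ, 3 ≤ m → ∀ t : ℝ, 1 ≤ t → (m : ℝ) * P t < Q t ^ m :=
  stmt_5_general n ℓ hℓ a b ha hb P Q hPdef hQdef hHilali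
end

section
/- Let n ≥ 2 be an integer. Then: (i) for every integer m ≥ 2 and every real t ≥ 1, m·(t² + t^{2n+1}) < (Σ_{i=0}^{n} t^{2i})^m; and (ii) there exists a real t ≥ 1 such that t² + t^{2n+1} ≥ Σ_{i=0}^{n} t^{2i}. Consequently the stabilization threshold 𝔭𝔭(ℂP^n; 1) equals 2. -/
/-!
Write `P(t) = ∑_{i ≤ n} t^{2i}` and `Q(t) = t² + t^{2n+1}`. For `n ≥ 2` and `t ≥ 1` the three
terms `1, t², t^{2n}` of `P` already give `P² > 2Q`, because `t^{2n+1} ≤ t^{2n+2}`; together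
with `P ≥ 2` this gives `m Q < P^m` for all `m ≥ 2`, as `m/2 ≤ 2^{m-2}`. At `m = 1` the
inequality fails: at `t = n + 1` each of the `n + 1` terms of `P` is at most `t^{2n}`, so
`P ≤ t^{2n+1} ≤ Q`.
-/

open Finset

noncomputable section

/-- The cohomological Poincaré polynomial of `ℂPⁿ`. -/
def poincareCP (n : ℕ) (t : ℝ) : ℝ := ∑ i ∈ range (n + 1), t ^ (2 * i)

/-- The homotopical Poincaré polynomial of `ℂPⁿ`. -/
def homotopyPoincareCP (n : ℕ) (t : ℝ) : ℝ := t ^ 2 + t ^ (2 * n + 1)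

end

theorem nat_mul_lt_pow_of_two_mul_lt_sq {S q : ℝ} (hS : 2 ≤ S) (hq : 2 * q < S ^ 2)
    {m : ℕ} (hm : 2 ≤ m) : m * q < S ^ m := by
  obtain ⟨k, rfl⟩ : ∃ k, m = k + 2 := ⟨m - 2, by omega⟩
  have hk : ((k + 2 : ℕ) : ℝ) ≤ 2 * S ^ k :=
    calc ((k + 2 : ℕ) : ℝ) ≤ (2 : ℝ) ^ (k + 1) := by exact_mod_cast Nat.lt_two_pow_self
      _ = 2 * 2 ^ k := by ring
      _ ≤ 2 * S ^ k := by gcongr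
  have hk0 : (0 : ℝ) < ((k + 2 : ℕ) : ℝ) := by positivity
  have key : 2 * (((k + 2 : ℕ) : ℝ) * q) < 2 * S ^ (k + 2) :=
    calc 2 * (((k + 2 : ℕ) : ℝ) * q) = ((k + 2 : ℕ) : ℝ) * (2 * q) := by ring
      _ < ((k + 2 : ℕ) : ℝ) * S ^ 2 := mul_lt_mul_of_pos_left hq hk0
      _ ≤ 2 * S ^ k * S ^ 2 := mul_le_mul_of_nonneg_right hk (sq_nonneg S)
      _ = 2 * S ^ (k + 2) := by ring
  linarith

section PoincareCP

variable {n : ℕ} {t : ℝ}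

theorem one_add_sq_add_pow_le_poincareCP (hn : 2 ≤ n) :
    1 + t ^ 2 + t ^ (2 * n) ≤ poincareCP n t := by
  have hlow : ∑ i ∈ range 2, t ^ (2 * i) ≤ ∑ i ∈ range n, t ^ (2 * i) :=
    sum_le_sum_of_subset_of_nonneg (range_mono hn) fun i _ _ => (even_two_mul i).pow_nonneg t
  rw [poincareCP, sum_range_succ]
  simpa [sum_range_succ] using hlow

theorem two_mul_homotopyPoincareCP_lt_sq (hn : 2 ≤ n) (ht : 1 ≤ t) :
    2 * homotopyPoincareCP n t < poincareCP n t ^ 2 := by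
  have hP := one_add_sq_add_pow_le_poincareCP (t := t) hn
  have hu : 0 ≤ t ^ (2 * n) := by positivity
  have htt : t ^ (2 * n + 1) ≤ t ^ 2 * t ^ (2 * n) := by
    rw [pow_succ, mul_comm]
    exact mul_le_mul_of_nonneg_right (by nlinarith) hu
  calc 2 * homotopyPoincareCP n t < (1 + t ^ 2 + t ^ (2 * n)) ^ 2 := by
        rw [homotopyPoincareCP]; nlinarith [sq_nonneg (t ^ 2), sq_nonneg (t ^ (2 * n))]
    _ ≤ poincareCP n t ^ 2 := by gcongr

theorem nat_mul_homotopyPoincareCP_lt_pow (hn : 2 ≤ n) (ht : 1 ≤ t) {m : ℕ} (hm : 2 ≤ m) :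
    m * homotopyPoincareCP n t < poincareCP n t ^ m := by
  have hP := one_add_sq_add_pow_le_poincareCP (t := t) hn
  have hS : 2 ≤ poincareCP n t := by
    nlinarith [sq_nonneg t, pow_nonneg (zero_le_one.trans ht) (2 * n)]
  exact nat_mul_lt_pow_of_two_mul_lt_sq hS (two_mul_homotopyPoincareCP_lt_sq hn ht) hm

theorem poincareCP_le_succ_mul_pow (ht : 1 ≤ t) : poincareCP n t ≤ (n + 1) * t ^ (2 * n) := by
  have h := sum_le_card_nsmul (range (n + 1)) (fun i => t ^ (2 * i)) (t ^ (2 * n))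
    fun i hi => pow_le_pow_right₀ ht (by rw [mem_range] at hi; omega)
  simpa [poincareCP, nsmul_eq_mul] using h

theorem poincareCP_le_homotopyPoincareCP_natCast_add_one :
    poincareCP n (n + 1) ≤ homotopyPoincareCP n (n + 1) := by
  have h := poincareCP_le_succ_mul_pow (n := n) (t := n + 1)
    (by linarith [n.cast_nonneg (α := ℝ)])
  have hpow : ((n : ℝ) + 1) * ((n : ℝ) + 1) ^ (2 * n) = ((n : ℝ) + 1) ^ (2 * n + 1) := by ring
  rw [homotopyPoincareCP]
  linarith [sq_nonneg ((n : ℝ) + 1)]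

end PoincareCP

theorem stmt_10 (n : ℕ) (hn : 2 ≤ n) :
    (∀ m : ℕ, 2 ≤ m → ∀ t : ℝ, 1 ≤ t →
        (m : ℝ) * (t ^ 2 + t ^ (2 * n + 1)) <
          (∑ i ∈ Finset.range (n + 1), t ^ (2 * i)) ^ m) ∧
    (∃ t : ℝ, 1 ≤ t ∧
        (∑ i ∈ Finset.range (n + 1), t ^ (2 * i)) ≤ t ^ 2 + t ^ (2 * n + 1)) ∧
    IsLeast {n₀ : ℕ | 0 < n₀ ∧ ∀ m : ℕ, n₀ ≤ m → ∀ t : ℝ, 1 ≤ t →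
        (m : ℝ) * (t ^ 2 + t ^ (2 * n + 1)) <
          (∑ i ∈ Finset.range (n + 1), t ^ (2 * i)) ^ m} 2 := by
  have stable : ∀ m : ℕ, 2 ≤ m → ∀ t : ℝ, 1 ≤ t →
      m * homotopyPoincareCP n t < poincareCP n t ^ m :=
    fun m hm t ht => nat_mul_homotopyPoincareCP_lt_pow hn ht hm
  have unstable : ∃ t : ℝ, 1 ≤ t ∧ poincareCP n t ≤ homotopyPoincareCP n t :=
    ⟨n + 1, by linarith [n.cast_nonneg (α := ℝ)],
      poincareCP_le_homotopyPoincareCP_natCast_add_one⟩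
  refine ⟨stable, unstable, ⟨two_pos, stable⟩, ?_⟩
  rintro n₀ ⟨hpos, h⟩
  by_contra! hlt
  obtain rfl : n₀ = 1 := by omega
  obtain ⟨t, ht, hle⟩ := unstable
  have h1 := h 1 le_rfl t ht
  simp only [Nat.cast_one, one_mul, pow_one] at h1
  exact absurd hle (not_le.mpr h1)
end

section
/- For every integer m ≥ 3 and every real t ≥ 1, m·(t² + t³) < (1 + t²)^m; moreover, at t = 1 one has 2·(t² + t³) = (1 + t²)², so the strict inequality with m = 2 fails. Consequently the stabilization threshold 𝔭𝔭(ℂP¹; 1) equals 3. -/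
lemma main_ineq : ∀ m : ℕ, 3 ≤ m → ∀ t : ℝ, 1 ≤ t →
    (m : ℝ) * (t ^ 2 + t ^ 3) < (1 + t ^ 2) ^ m := by
  intro m hm
  induction m with
  | zero => omega
  | succ n ih =>
    intro t ht
    rcases Nat.lt_or_ge n 3 with h3 | h3
    · interval_cases n
      · omega
      · omega
      · push_cast
        nlinarith [mul_le_mul_of_nonneg_left ht (by positivity : (0:ℝ) ≤ t^3), sq_nonneg (t^3 - 1), sq_nonneg t]
    · have hn := ih h3 t ht
      have hpos : (0:ℝ) < t ^ 2 + t ^ 3 := by positivity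
      have h1 : ((n:ℝ) + 1) * (t ^ 2 + t ^ 3) ≤ (1 + t ^ 2) * ((n:ℝ) * (t ^ 2 + t ^ 3)) := by
        have hn3 : (3:ℝ) ≤ n := by exact_mod_cast h3
        have h2t : (2:ℝ) ≤ 1 + t ^ 2 := by nlinarith
        have : ((n:ℝ) + 1) ≤ (1 + t ^ 2) * n := by nlinarith
        calc ((n:ℝ) + 1) * (t ^ 2 + t ^ 3) ≤ ((1 + t ^ 2) * n) * (t ^ 2 + t ^ 3) :=
              mul_le_mul_of_nonneg_right this hpos.le
          _ = (1 + t ^ 2) * ((n:ℝ) * (t ^ 2 + t ^ 3)) := by ring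
      have h2 : (1 + t ^ 2) * ((n:ℝ) * (t ^ 2 + t ^ 3)) < (1 + t ^ 2) * (1 + t ^ 2) ^ n := by
        apply mul_lt_mul_of_pos_left hn
        nlinarith
      push_cast
      calc ((n:ℝ) + 1) * (t ^ 2 + t ^ 3) ≤ (1 + t ^ 2) * ((n:ℝ) * (t ^ 2 + t ^ 3)) := h1
        _ < (1 + t ^ 2) * (1 + t ^ 2) ^ n := h2
        _ = (1 + t ^ 2) ^ (n + 1) := (pow_succ' _ _).symm

theorem stmt_11 :
    (∀ m : ℕ, 3 ≤ m → ∀ t : ℝ, 1 ≤ t →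
        (m : ℝ) * (t ^ 2 + t ^ 3) < (1 + t ^ 2) ^ m) ∧
    ((2 : ℝ) * ((1 : ℝ) ^ 2 + (1 : ℝ) ^ 3) = (1 + (1 : ℝ) ^ 2) ^ 2) ∧
    ¬ (∀ t : ℝ, 1 ≤ t → (2 : ℝ) * (t ^ 2 + t ^ 3) < (1 + t ^ 2) ^ 2) ∧
    IsLeast {n₀ : ℕ | 0 < n₀ ∧ ∀ m : ℕ, n₀ ≤ m → ∀ t : ℝ, 1 ≤ t →
        (m : ℝ) * (t ^ 2 + t ^ 3) < (1 + t ^ 2) ^ m} 3 := by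
  refine ⟨main_ineq, by norm_num, ?_, ⟨⟨by norm_num, main_ineq⟩, ?_⟩⟩
  · intro h
    have := h 1 le_rfl
    norm_num at this
  · rintro n ⟨hn0, hn⟩
    by_contra hlt
    push_neg at hlt
    have := hn 2 (by omega) 1 le_rfl
    norm_num at this
end

section
/- Let n ≥ 1 be an integer. Then: (i) for every integer m ≥ 3 and every real t ≥ 1, m·(t^{2n} + t^{4n−1}) < (1 + t^{2n})^m; and (ii) at t = 1 one has 2·(t^{2n} + t^{4n−1}) = (1 + t^{2n})², so the strict inequality with m = 2 fails. Consequently the stabilization threshold 𝔭𝔭(S^{2n}; 1) equals 3. -/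
private lemma aux_pow (x : ℝ) (hx : 1 ≤ x) :
    ∀ m : ℕ, 3 ≤ m → (m : ℝ) * (x + x ^ 2) < (1 + x) ^ m := by
  intro m hm
  induction m, hm using Nat.le_induction with
  | base => push_cast; nlinarith [sq_nonneg x, sq_nonneg (1 - x)]
  | succ m hm ih =>
      have h1 : (1 + x) ^ (m + 1) = (1 + x) * (1 + x) ^ m := by ring
      have hx0 : (0 : ℝ) < 1 + x := by linarith
      have hm3 : (3 : ℝ) ≤ (m : ℝ) := by exact_mod_cast hm
      push_cast
      rw [h1]
      have h2 := mul_lt_mul_of_pos_left ih hx0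
      nlinarith [h2, mul_nonneg (by nlinarith : (0:ℝ) ≤ (m:ℝ)*x - 1) (by nlinarith : (0:ℝ) ≤ x + x^2)]

private lemma main_ineq_s12 (n : ℕ) (hn : 1 ≤ n) (m : ℕ) (hm : 3 ≤ m) (t : ℝ) (ht : 1 ≤ t) :
    (m : ℝ) * (t ^ (2 * n) + t ^ (4 * n - 1)) < (1 + t ^ (2 * n)) ^ m := by
  set x := t ^ (2 * n) with hxdef
  have hx : 1 ≤ x := by rw [hxdef]; exact one_le_pow₀ ht
  have hle : t ^ (4 * n - 1) ≤ x ^ 2 := by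
    have : x ^ 2 = t ^ (4 * n) := by rw [hxdef, ← pow_mul]; ring_nf
    rw [this]
    exact pow_le_pow_right₀ ht (by omega)
  have h := aux_pow x hx m hm
  have hm0 : (0 : ℝ) ≤ (m : ℝ) := Nat.cast_nonneg m
  nlinarith [h, mul_le_mul_of_nonneg_left hle hm0]

theorem stmt_12 (n : ℕ) (hn : 1 ≤ n) :
    (∀ m : ℕ, 3 ≤ m → ∀ t : ℝ, 1 ≤ t →
        (m : ℝ) * (t ^ (2 * n) + t ^ (4 * n - 1)) < (1 + t ^ (2 * n)) ^ m) ∧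
    ((2 : ℝ) * ((1 : ℝ) ^ (2 * n) + (1 : ℝ) ^ (4 * n - 1)) =
        (1 + (1 : ℝ) ^ (2 * n)) ^ 2) ∧
    ¬ (∀ t : ℝ, 1 ≤ t →
        (2 : ℝ) * (t ^ (2 * n) + t ^ (4 * n - 1)) < (1 + t ^ (2 * n)) ^ 2) ∧
    IsLeast {n₀ : ℕ | 0 < n₀ ∧ ∀ m : ℕ, n₀ ≤ m → ∀ t : ℝ, 1 ≤ t →
        (m : ℝ) * (t ^ (2 * n) + t ^ (4 * n - 1)) < (1 + t ^ (2 * n)) ^ m} 3 := by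
  refine ⟨fun m hm t ht => main_ineq_s12 n hn m hm t ht, by norm_num, ?_, ?_, ?_⟩
  · intro h
    have := h 1 le_rfl
    norm_num at this
  · exact ⟨by norm_num, fun m hm t ht => main_ineq_s12 n hn m hm t ht⟩
  · intro k hk
    by_contra hlt
    push_neg at hlt
    have := hk.2 2 (by omega) 1 le_rfl
    norm_num at this
end

section
/- Let k ≥ 1 be an integer and let n₁, …, n_k be integers with n_i ≥ 1 for every i. Then for every integer m ≥ 3 and all reals t ≥ 1, u ≥ 1, v ≥ 1, one has m·Σ_{i=1}^{k} (t²uv + t^{2n_i+1}(uv)^{n_i+1}) < (∏_{i=1}^{k} Σ_{j=0}^{n_i} t^{2j}(uv)^j)^m. -/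
/-!
Write `c = t²uv`, so that the `i`-th factor on the right is the geometric sum
`Sᵢ = 1 + c + ⋯ + c^{nᵢ}` and the `i`-th summand on the left is at most `c + c^{nᵢ+1}`.
With `x = Sᵢ - 1 ≥ max c c^{nᵢ}` we get `c + c^{nᵢ+1} ≤ x + x²`, and for `m ≥ 3` the
binomial expansion gives `m (x + x²) ≤ (1 + x)^m - 1 = Sᵢ^m - 1`. Finally
`∑ (Sᵢ^m - 1) < 1 + ∑ (Sᵢ^m - 1) ≤ ∏ Sᵢ^m`.
-/

open Finset

theorem Finset.one_add_sum_le_prod_one_add {ι : Type*} (s : Finset ι) {f : ι → ℝ}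
    (hf : ∀ i ∈ s, 0 ≤ f i) : 1 + ∑ i ∈ s, f i ≤ ∏ i ∈ s, (1 + f i) := by
  induction s using Finset.cons_induction with
  | empty => simp
  | cons a s ha ih =>
    rw [sum_cons, prod_cons]
    have hfa : 0 ≤ f a := hf a (mem_cons_self a s)
    have hfs : ∀ i ∈ s, 0 ≤ f i := fun i hi => hf i (mem_cons_of_mem hi)
    nlinarith [ih hfs, sum_nonneg hfs]

theorem Finset.sum_lt_prod_of_le_sub_one {ι : Type*} (s : Finset ι) {a b : ι → ℝ}
    (hb : ∀ i ∈ s, 1 ≤ b i) (hab : ∀ i ∈ s, a i ≤ b i - 1) :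
    ∑ i ∈ s, a i < ∏ i ∈ s, b i :=
  calc ∑ i ∈ s, a i ≤ ∑ i ∈ s, (b i - 1) := sum_le_sum hab
    _ < 1 + ∑ i ∈ s, (b i - 1) := lt_one_add _
    _ ≤ ∏ i ∈ s, (1 + (b i - 1)) :=
      s.one_add_sum_le_prod_one_add fun i hi => sub_nonneg.2 (hb i hi)
    _ = ∏ i ∈ s, b i := by simp

theorem one_add_mul_add_mul_sq_le_one_add_pow {x : ℝ} (hx : 0 ≤ x) {m : ℕ} (hm : 3 ≤ m) :
    1 + m * x + m * x ^ 2 ≤ (1 + x) ^ m := by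
  induction m, hm using Nat.le_induction with
  | base => push_cast; nlinarith [pow_nonneg hx 3]
  | succ m hm ih =>
    have hm' : (3 : ℝ) ≤ m := by exact_mod_cast hm
    rw [pow_succ (1 + x)]; push_cast
    nlinarith [mul_le_mul_of_nonneg_right ih (by linarith : (0 : ℝ) ≤ 1 + x),
      pow_nonneg hx 3, mul_nonneg (by linarith : (0 : ℝ) ≤ m - 1) (sq_nonneg x)]

theorem one_le_geom_sum {c : ℝ} (hc : 0 ≤ c) (n : ℕ) : 1 ≤ ∑ j ∈ range (n + 1), c ^ j := by
  simpa [sum_range_succ'] using sum_nonneg fun j (_ : j ∈ range n) => pow_nonneg hc (j + 1)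

theorem add_pow_succ_le_geom_sum_sub_one {c : ℝ} (hc : 0 ≤ c) {n : ℕ} (hn : 1 ≤ n) :
    c + c ^ (n + 1) ≤
      (∑ j ∈ range (n + 1), c ^ j - 1) + (∑ j ∈ range (n + 1), c ^ j - 1) ^ 2 := by
  set x := ∑ j ∈ range (n + 1), c ^ j - 1
  have hx : x = ∑ j ∈ range n, c ^ (j + 1) := by
    simp [x, sum_range_succ']
  have hterm : ∀ j ∈ range n, c ^ (j + 1) ≤ x := fun j hj =>
    hx ▸ single_le_sum (fun i _ => pow_nonneg hc (i + 1)) hj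
  have hcx : c ≤ x := by simpa using hterm 0 (mem_range.2 hn)
  have hcnx : c ^ n ≤ x := by
    simpa [Nat.sub_add_cancel hn] using hterm (n - 1) (mem_range.2 (by omega))
  have hsq : c ^ (n + 1) ≤ x ^ 2 := by
    rw [pow_succ', sq]
    exact mul_le_mul hcx hcnx (pow_nonneg hc n) (hc.trans hcx)
  linarith

theorem mul_add_pow_succ_le_geom_sum_pow_sub_one {c : ℝ} (hc : 0 ≤ c) {n : ℕ} (hn : 1 ≤ n)
    {m : ℕ} (hm : 3 ≤ m) :
    m * (c + c ^ (n + 1)) ≤ (∑ j ∈ range (n + 1), c ^ j) ^ m - 1 := by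
  have key := one_add_mul_add_mul_sq_le_one_add_pow (sub_nonneg.2 (one_le_geom_sum hc n)) hm
  rw [add_sub_cancel] at key
  nlinarith [add_pow_succ_le_geom_sum_sub_one hc hn, (Nat.cast_nonneg m : (0 : ℝ) ≤ m)]

theorem stmt_16_general (k : ℕ) (n : ℕ → ℕ)
    (hn : ∀ i ∈ Finset.range k, 1 ≤ n i) :
    ∀ m : ℕ, 3 ≤ m → ∀ t u v : ℝ, 1 ≤ t → 1 ≤ u → 1 ≤ v →
      (m : ℝ) * (∑ i ∈ Finset.range k,
          (t ^ 2 * (u * v) + t ^ (2 * n i + 1) * (u * v) ^ (n i + 1))) <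
        (∏ i ∈ Finset.range k,
          ∑ j ∈ Finset.range (n i + 1), t ^ (2 * j) * (u * v) ^ j) ^ m := by
  intro m hm t u v ht hu hv
  have hw : 0 ≤ u * v := by positivity
  have hc : 0 ≤ t ^ 2 * (u * v) := by positivity
  have hgeom (j : ℕ) : t ^ (2 * j) * (u * v) ^ j = (t ^ 2 * (u * v)) ^ j := by
    rw [pow_mul, mul_pow (t ^ 2)]
  have hsummand (p : ℕ) : t ^ (2 * p + 1) * (u * v) ^ (p + 1) ≤ (t ^ 2 * (u * v)) ^ (p + 1) := by
    rw [mul_pow (t ^ 2), ← pow_mul]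
    exact mul_le_mul_of_nonneg_right (pow_le_pow_right₀ ht (by omega)) (pow_nonneg hw _)
  simp_rw [hgeom, mul_sum, ← prod_pow]
  refine sum_lt_prod_of_le_sub_one _ (fun i _ => one_le_pow₀ (one_le_geom_sum hc (n i)))
    fun i hi => le_trans ?_ (mul_add_pow_succ_le_geom_sum_pow_sub_one hc (hn i hi) hm)
  gcongr
  exact hsummand (n i)

theorem stmt_16 (k : ℕ) (hk : 1 ≤ k) (n : ℕ → ℕ)
    (hn : ∀ i ∈ Finset.range k, 1 ≤ n i) :
    ∀ m : ℕ, 3 ≤ m → ∀ t u v : ℝ, 1 ≤ t → 1 ≤ u → 1 ≤ v →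
      (m : ℝ) * (∑ i ∈ Finset.range k,
          (t ^ 2 * (u * v) + t ^ (2 * n i + 1) * (u * v) ^ (n i + 1))) <
        (∏ i ∈ Finset.range k,
          ∑ j ∈ Finset.range (n i + 1), t ^ (2 * j) * (u * v) ^ j) ^ m :=
  stmt_16_general k n hn
end
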